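/- arXiv:1902.07675 — 5 statements merged into one kernel-verified Lean document; each statement's English description precedes it below -/
import Mathlib

section
/- Let S be a positive affine semigroup (its only invertible element is 0). Then the set of irreducible elements of S is finite and generates S as a monoid. -/
/-!
Every irreducible element of a positive monoid lies in every generating set, so there are
finitely many. For generation, note that by Dickson's lemma the divisibility preorder
`x ∣ y ↔ ∃ z, y = x + z` of a finitely generated commutative monoid is a well-quasi-order,
being the image of the componentwise order on `ℕ^T` for a finite generating set `T`. In a
positive cancellative monoid, `x ∣ x + z` is strict as soon as `z ≠ 0`, so well-founded
induction writes every element as a sum of irreducibles.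
-/

section Irreducible

variable {M : Type*}

theorem setOf_addIrreducible_subset_of_closure_eq_top [AddMonoid M] [Subsingleton (AddUnits M)]
    {s : Set M} (hs : AddSubmonoid.closure s = ⊤) : {p : M | AddIrreducible p} ⊆ s := by
  intro p hp
  have hp_mem : p ∈ AddSubmonoid.closure s := hs ▸ AddSubmonoid.mem_top p
  induction hp_mem using AddSubmonoid.closure_induction with
  | mem x hx => exact hx
  | zero => exact absurd hp not_addIrreducible_zero
  | add x y _ _ ihx ihy =>
    rcases hp.eq_zero_or_eq_zero with rfl | rfl
    · rw [zero_add] at hp ⊢; exact ihy hp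
    · rw [add_zero] at hp ⊢; exact ihx hp

theorem setOf_addIrreducible_finite [AddMonoid M] [Subsingleton (AddUnits M)] [AddMonoid.FG M] :
    {p : M | AddIrreducible p}.Finite := by
  obtain ⟨T, hT⟩ := AddMonoid.FG.fg_top (M := M)
  exact T.finite_toSet.subset (setOf_addIrreducible_subset_of_closure_eq_top hT)

theorem wellQuasiOrdered_exists_add [AddCommMonoid M] [AddMonoid.FG M] :
    WellQuasiOrdered fun x y : M => ∃ z, y = x + z := by
  obtain ⟨T, hT⟩ := AddMonoid.FG.fg_top (M := M)
  let π : (T → ℕ) → M := fun a => ∑ i, a i • (i : M)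
  have hπ : Function.Surjective π := fun x =>
    (AddSubmonoid.mem_closure_finset'.1 (hT ▸ AddSubmonoid.mem_top x)).imp fun _ h => h.symm
  refine wellQuasiOrdered_le.of_surjective ⟨π, fun {a b} hab => ⟨π (b - a), ?_⟩⟩ hπ
  simp only [π, ← Finset.sum_add_distrib, ← add_nsmul, Pi.sub_apply,
    Nat.add_sub_of_le (hab _)]

theorem wellFounded_exists_add_ne_zero [AddCancelCommMonoid M] [Subsingleton (AddUnits M)]
    [AddMonoid.FG M] : WellFounded fun x y : M => ∃ z ≠ 0, y = x + z := by
  let _ : IsPreorder M fun x y => ∃ z, y = x + z :=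
    { refl x := ⟨0, (add_zero x).symm⟩
      trans _ _ _ := fun ⟨u, hu⟩ ⟨v, hv⟩ => ⟨u + v, by rw [hv, hu, add_assoc]⟩ }
  refine Subrelation.wf (fun {x y} ⟨z, hz, hy⟩ => ⟨⟨z, hy⟩, ?_⟩)
    wellQuasiOrdered_exists_add.wellFounded
  rintro ⟨w, rfl⟩
  have : w + z = 0 := add_left_cancel (a := y) (by rw [← add_assoc, ← hy, add_zero])
  exact hz (add_eq_zero.1 this).2

theorem closure_setOf_addIrreducible_eq_top [AddCancelCommMonoid M] [Subsingleton (AddUnits M)]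
    [AddMonoid.FG M] : AddSubmonoid.closure {p : M | AddIrreducible p} = ⊤ := by
  refine eq_top_iff.2 fun s _ => wellFounded_exists_add_ne_zero.induction s fun s ih => ?_
  by_cases hs : IsAddUnit s
  · rw [isAddUnit_iff_eq_zero.1 hs]
    exact zero_mem _
  rcases addIrreducible_or_factor hs with hirr | ⟨a, b, ha, hb, rfl⟩
  · exact AddSubmonoid.subset_closure hirr
  have ha0 : a ≠ 0 := fun h => ha (h ▸ isAddUnit_zero)
  have hb0 : b ≠ 0 := fun h => hb (h ▸ isAddUnit_zero)
  exact add_mem (ih a ⟨b, hb0, rfl⟩) (ih b ⟨a, ha0, add_comm a b⟩)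

end Irreducible

theorem positive_affine_semigroup_hilbert_basis_general
    (S : Type) [AddCancelCommMonoid S] (hFG : AddMonoid.FG S)
    (hpos : ∀ s : S, IsAddUnit s → s = 0) :
    {s : S | ¬ IsAddUnit s ∧ ∀ x y : S, s = x + y → IsAddUnit x ∨ IsAddUnit y}.Finite ∧
    AddSubmonoid.closure
      {s : S | ¬ IsAddUnit s ∧ ∀ x y : S, s = x + y → IsAddUnit x ∨ IsAddUnit y} = ⊤ := by
  have : Subsingleton (AddUnits S) :=
    ⟨fun u v => AddUnits.ext ((hpos _ u.isAddUnit).trans (hpos _ v.isAddUnit).symm)⟩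
  have hirr : {s : S | ¬ IsAddUnit s ∧ ∀ x y : S, s = x + y → IsAddUnit x ∨ IsAddUnit y} =
      {p | AddIrreducible p} :=
    Set.ext fun p => (addIrreducible_iff (p := p)).symm
  rw [hirr]
  exact ⟨setOf_addIrreducible_finite, closure_setOf_addIrreducible_eq_top⟩

/-- Let `S` be a positive affine semigroup (finitely generated,
cancellative, embeddable in `ℤ^r`, whose only invertible element is `0`). Then the
set of irreducible elements of `S` (elements that are not invertible and whenever
written as a sum, one summand is invertible) is finite and generates `S`. -/
theorem positive_affine_semigroup_hilbert_basis
    (S : Type) [AddCancelCommMonoid S] (hFG : AddMonoid.FG S)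
    (r : ℕ) (f : S →+ (Fin r → ℤ)) (hf : Function.Injective f)
    (hpos : ∀ s : S, IsAddUnit s → s = 0) :
    {s : S | ¬ IsAddUnit s ∧ ∀ x y : S, s = x + y → IsAddUnit x ∨ IsAddUnit y}.Finite ∧
    AddSubmonoid.closure
      {s : S | ¬ IsAddUnit s ∧ ∀ x y : S, s = x + y → IsAddUnit x ∨ IsAddUnit y} = ⊤ :=
  positive_affine_semigroup_hilbert_basis_general S hFG hpos
end

section
/- Let L be a finite distributive lattice with join-irreducible elements x_1, ..., x_r. Let F(L) be the free commutative monoid on the underlying set of L, and define π: F(L) → str(L) on generators by π([l]) = e_0 + Σ_{x_i ≤ l} e_i ∈ ℕ^{r+1}. Then π is a surjective monoid morphism. -/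
open Classical in
/-- The generator map `l ↦ e_0 + Σ_{x i ≤ l} e_i ∈ ℕ^{r+1}`. -/
noncomputable def strGen {L : Type} [Lattice L] {r : ℕ} (x : Fin r → L) (l : L) :
    Fin (r + 1) → ℕ :=
  Fin.cons 1 fun i => if x i ≤ l then 1 else 0

/-- For a finite distributive lattice `L` with join-irreducibles
`x 1, ..., x r`, the map `π` from the free commutative monoid on `L`
(multisets on `L`) to `ℕ^{r+1}`, sending the generator `[l]` to
`e_0 + Σ_{x i ≤ l} e_i`, is a monoid morphism which maps onto `str L`. -/
theorem strGen_pi_surjective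
    (L : Type) [DistribLattice L] [Fintype L] [OrderBot L]
    (r : ℕ) (x : Fin r → L) (hxinj : Function.Injective x)
    (hxirr : Set.range x = {a : L | SupIrred a})
    (hmono : ∀ i j : Fin r, x i < x j → i < j) :
    (∀ s t : Multiset L,
      (((s + t).map (strGen x)).sum : Fin (r+1) → ℕ) =
        (s.map (strGen x)).sum + (t.map (strGen x)).sum) ∧
    (∀ s : Multiset L,
      ((s.map (strGen x)).sum : Fin (r+1) → ℕ) ∈
        {a : Fin (r+1) → ℕ | (∀ i : Fin r, a i.succ ≤ a 0) ∧
          (∀ i j : Fin r, x i < x j → a j.succ ≤ a i.succ)}) ∧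
    (∀ a : Fin (r+1) → ℕ,
      a ∈ {a : Fin (r+1) → ℕ | (∀ i : Fin r, a i.succ ≤ a 0) ∧
          (∀ i j : Fin r, x i < x j → a j.succ ≤ a i.succ)} →
      ∃ s : Multiset L, ((s.map (strGen x)).sum : Fin (r+1) → ℕ) = a) := by
  classical
  have hgen0 : ∀ l : L, strGen x l 0 = 1 := fun l => rfl
  have hgens : ∀ (l : L) (i : Fin r),
      strGen x l i.succ = if x i ≤ l then 1 else 0 := fun l i => by
    simp [strGen]
  refine ⟨fun s t => by rw [Multiset.map_add, Multiset.sum_add], ?_, ?_⟩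
  · intro s
    induction s using Multiset.induction with
    | empty => simp
    | cons l s ih =>
      simp only [Multiset.map_cons, Multiset.sum_cons]
      constructor
      · intro i
        have := ih.1 i
        simp only [Pi.add_apply, hgen0, hgens]
        split <;> omega
      · intro i j hij
        have := ih.2 i j hij
        have hle : x j ≤ l → x i ≤ l := fun h => le_trans hij.le h
        simp only [Pi.add_apply, hgens]
        by_cases hjl : x j ≤ l
        · rw [if_pos hjl, if_pos (hle hjl)]; omega
        · rw [if_neg hjl]; split <;> omega
  · intro a ha
    obtain ⟨ha0, hamono⟩ := ha
    -- strong induction on a 0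
    suffices h : ∀ n (a : Fin (r+1) → ℕ), (∀ i : Fin r, a i.succ ≤ a 0) →
        (∀ i j : Fin r, x i < x j → a j.succ ≤ a i.succ) → a 0 = n →
        ∃ s : Multiset L, ((s.map (strGen x)).sum : Fin (r+1) → ℕ) = a from
      h (a 0) a ha0 hamono rfl
    clear ha0 hamono a
    intro n
    induction n using Nat.strong_induction_on with
    | _ n ihn =>
    intro a ha0 hamono hn
    cases n with
    | zero =>
      refine ⟨0, funext fun k => ?_⟩
      simp only [Multiset.map_zero, Multiset.sum_zero, Pi.zero_apply]
      rcases Fin.eq_zero_or_eq_succ k with rfl | ⟨i, rfl⟩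
      · omega
      · have := ha0 i; omega
    | succ n =>
      set S : Finset (Fin r) := Finset.univ.filter fun i => 0 < a i.succ with hS
      set l : L := S.sup x with hl
      have hprime : ∀ i : Fin r, SupPrime (x i) := fun i => by
        rw [supPrime_iff_supIrred]
        have : x i ∈ Set.range x := ⟨i, rfl⟩
        rw [hxirr] at this
        exact this
      have hiff : ∀ i : Fin r, x i ≤ l ↔ 0 < a i.succ := by
        intro i
        constructor
        · intro h
          rw [hl, (hprime i).le_finset_sup] at h
          obtain ⟨j, hjS, hij⟩ := h
          have hj : 0 < a j.succ := by simpa [hS] using hjS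
          rcases lt_or_eq_of_le hij with hlt | heq
          · exact lt_of_lt_of_le hj (hamono i j hlt)
          · rwa [hxinj heq]
        · intro h
          exact Finset.le_sup (by simpa [hS] using h)
      -- define b = a - strGen x l
      set b : Fin (r+1) → ℕ := a - strGen x l with hb
      have hgen_le : strGen x l ≤ a := by
        intro k
        rcases Fin.eq_zero_or_eq_succ k with rfl | ⟨i, rfl⟩
        · rw [hgen0]
          exact le_trans (Nat.le_add_left 1 n) (le_of_eq hn.symm)
        · rw [hgens]
          split
          · exact (hiff i).1 ‹_›
          · exact Nat.zero_le _
      have hb0 : ∀ i : Fin r, b i.succ ≤ b 0 := by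
        intro i
        simp only [hb, Pi.sub_apply, hgen0, hgens]
        have h0 := ha0 i
        split
        · omega
        · have : a i.succ = 0 := by
            by_contra h
            exact ‹¬ x i ≤ l› ((hiff i).2 (Nat.pos_of_ne_zero h))
          omega
      have hbmono : ∀ i j : Fin r, x i < x j → b j.succ ≤ b i.succ := by
        intro i j hij
        have hm := hamono i j hij
        simp only [hb, Pi.sub_apply, hgens]
        by_cases hjl : x j ≤ l
        · have hil : x i ≤ l := le_trans hij.le hjl
          simp only [if_pos hjl, if_pos hil]
          omega
        · have : a j.succ = 0 := by
            by_contra h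
            exact hjl ((hiff j).2 (Nat.pos_of_ne_zero h))
          simp only [if_neg hjl]
          omega
      have hbn : b 0 = n := by
        simp only [hb, Pi.sub_apply, hgen0]; omega
      obtain ⟨s, hs⟩ := ihn n (by omega) b hb0 hbmono hbn
      refine ⟨l ::ₘ s, funext fun k => ?_⟩
      have := congrFun hs k
      simp only [Multiset.map_cons, Multiset.sum_cons, Pi.add_apply, this,
        hb, Pi.sub_apply]
      exact Nat.add_sub_cancel' (hgen_le k)
end

section
/- Every congruence on the monoid ℕ^n (an equivalence relation that is a submonoid of ℕ^n × ℕ^n, i.e. closed under componentwise addition) is finitely generated: there exists a finite subset ρ ⊆ ℕ^n × ℕ^n such that the congruence is the smallest congruence containing ρ. (Redei's theorem.) -/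
/-!
The binomials `X^a - X^b` with `a ~ b` generate an ideal of the polynomial ring `ℚ[ℕ^n]`,
which is Noetherian, so finitely many of them, coming from pairs `ρ`, already generate it.
If `d` is the congruence generated by `ρ`, these binomials lie in the kernel of
`ℚ[ℕ^n] → ℚ[ℕ^n / d]`, hence so does the whole ideal; and `X^a - X^b` lies in that kernel
exactly when `a` and `b` are `d`-related.
-/

open AddMonoidAlgebra

namespace AddCon

variable {k M : Type*} [CommRing k] [Nontrivial k] [AddMonoid M]

theorem single_sub_single_mem_ker_mapDomainRingHom_iff (c : AddCon M) (a b : M) :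
    single a (1 : k) - single b 1 ∈ RingHom.ker (mapDomainRingHom k c.mk') ↔ c a b := by
  rw [RingHom.mem_ker, map_sub, sub_eq_zero, mapDomainRingHom_apply, mapDomainRingHom_apply,
    mapDomain_single, mapDomain_single, (single_left_injective one_ne_zero).eq_iff]
  exact c.eq

theorem exists_finset_eq_addConGen [IsNoetherianRing k[M]] (c : AddCon M) :
    ∃ ρ : Finset (M × M), c = addConGen fun a b => (a, b) ∈ ρ := by
  classical
  let binomial : M × M → k[M] := fun p => single p.1 1 - single p.2 1
  obtain ⟨T, hTc, hspan⟩ := (Submodule.fg_span_iff_fg_span_finset_subset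
    (binomial '' {p | c p.1 p.2})).1 (IsNoetherian.noetherian (R := k[M]) _)
  obtain ⟨ρ, hρc, rfl⟩ := Finset.subset_set_image_iff.1 hTc
  refine ⟨ρ, le_antisymm ?_ (addConGen_le.2 fun a b hab => hρc hab)⟩
  set d := addConGen fun a b => (a, b) ∈ ρ
  have hρd :
      Submodule.span k[M] ↑(ρ.image binomial) ≤ RingHom.ker (mapDomainRingHom k d.mk') := by
    refine Submodule.span_le.2 fun x hx => ?_
    obtain ⟨p, hp, rfl⟩ := Finset.mem_image.1 hx
    exact (single_sub_single_mem_ker_mapDomainRingHom_iff d p.1 p.2).2 (.of _ _ hp)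
  intro a b hab
  refine (single_sub_single_mem_ker_mapDomainRingHom_iff (k := k) d a b).1 (hρd ?_)
  exact hspan ▸ Submodule.subset_span ⟨(a, b), hab, rfl⟩

end AddCon

instance AddMonoidAlgebra.isNoetherianRing_fin_arrow_nat (k : Type*) [CommRing k]
    [IsNoetherianRing k] (n : ℕ) : IsNoetherianRing (AddMonoidAlgebra k (Fin n → ℕ)) :=
  isNoetherianRing_of_ringEquiv (MvPolynomial (Fin n) k)
    (domCongr k k Finsupp.addEquivFunOnFinite).toRingEquiv

/-- Redei's theorem: Every congruence on the monoid `ℕ^n`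
(an additive congruence, i.e. an equivalence relation closed under componentwise
addition) is finitely generated: there is a finite set `ρ ⊆ ℕ^n × ℕ^n` such
that the congruence is the smallest congruence containing `ρ`. -/
theorem redei_congruence_fg (n : ℕ) (c : AddCon (Fin n → ℕ)) :
    ∃ ρ : Finset ((Fin n → ℕ) × (Fin n → ℕ)),
      c = addConGen fun a b => (a, b) ∈ ρ :=
  AddCon.exists_finset_eq_addConGen (k := ℚ) c
end

section
/- Let A be an algebra of (S,φ)-type with respect to a presentation (π, P) of the positive affine semigroup S, with generators b_1, ..., b_n and monomials 𝐛^ξ = b_1^{ξ_1} ⋯ b_n^{ξ_n}. Define F_l A = span{𝐛^ξ : φ̃(ξ) ≤ l} where φ̃ = φ ∘ π. Then for all ξ, ν ∈ ℕ^n there exists a nonzero scalar c_{ξ,ν} ∈ k^× such that 𝐛^ξ 𝐛^ν ≡ c_{ξ,ν} 𝐛^{ξ+ν} modulo F_{φ̃(ξ+ν)-1} A. In particular {F_l A} is a multiplicative filtration of A. -/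
/-!
Bubble-sort words in the generators. Replacing an adjacent descent `b j * b i` (`i < j`) by
`b i * b j` costs the nonzero scalar `c i j` plus words of strictly smaller `φ̃`-weight, so
well-founded induction on (weight, number of inversions) shows that every word equals a nonzero
multiple of its sorted monomial modulo the filtration layer just below its weight. Since
`F_l * F_l'` is spanned by products of monomials, multiplicativity of the filtration follows.
-/

/-- Ordered monomial `𝐛^ξ = b₁^{ξ₁} ⋯ bₙ^{ξₙ}` in a (noncommutative) ring. -/
noncomputable def bpow {A : Type} [Ring A] {n : ℕ} (b : Fin n → A) (ξ : Fin n → ℕ) : A :=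
  ((List.finRange n).map fun i => b i ^ ξ i).prod

/-- The canonical map `π : ℕ^n → S`, `ξ ↦ Σ ξ i • s i`. -/
def piMap {S : Type} [AddCommMonoid S] {n : ℕ} (s : Fin n → S) (ξ : Fin n → ℕ) : S :=
  ∑ i, ξ i • s i

/-- The filtration layer `F_l A = span { 𝐛^ξ : φ̃(ξ) ≤ l }`. -/
noncomputable def typeFilt (k : Type) [Field k] {A : Type} [Ring A] [Algebra k A]
    {S : Type} [AddCommMonoid S] {n : ℕ} (s : Fin n → S) (φ : S →+ ℕ)
    (b : Fin n → A) (l : ℕ) : Submodule k A :=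
  Submodule.span k {x | ∃ ξ : Fin n → ℕ, φ (piMap s ξ) ≤ l ∧ x = bpow b ξ}

namespace SPhiType

open List

variable {n : ℕ}

def wordCount (w : List (Fin n)) : Fin n → ℕ := fun i => w.count i

def sortedWord (ξ : Fin n → ℕ) : List (Fin n) :=
  (finRange n).flatMap fun i => replicate (ξ i) i

def inversions : List (Fin n) → ℕ
  | [] => 0
  | a :: w => w.countP (· < a) + inversions w

lemma wordCount_append (w w' : List (Fin n)) :
    wordCount (w ++ w') = wordCount w + wordCount w' := by
  funext i
  simp [wordCount, count_append]

lemma wordCount_eq_of_perm {w w' : List (Fin n)} (h : w.Perm w') : wordCount w = wordCount w' :=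
  funext fun i => h.count_eq i

lemma wordCount_sortedWord (ξ : Fin n → ℕ) : wordCount (sortedWord ξ) = ξ := by
  funext i
  simp only [wordCount, sortedWord, count_flatMap, Function.comp_def]
  rw [← ofFn_eq_map, sum_ofFn]
  simp [count_replicate]

lemma sortedLE_sortedWord (ξ : Fin n → ℕ) : (sortedWord ξ).SortedLE := by
  rw [sortedLE_iff_pairwise, sortedWord, pairwise_flatMap]
  refine ⟨fun i _ => pairwise_replicate.2 (Or.inr le_rfl), (pairwise_lt_finRange n).imp ?_⟩
  intro i j hij x hx y hy
  rw [eq_of_mem_replicate hx, eq_of_mem_replicate hy]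
  exact hij.le

lemma eq_sortedWord_of_sortedLE {w : List (Fin n)} (h : w.SortedLE) :
    w = sortedWord (wordCount w) :=
  Perm.eq_of_sortedLE h (sortedLE_sortedWord _) <| perm_iff_count.2 fun i =>
    (congrFun (wordCount_sortedWord (wordCount w)) i).symm

lemma exists_eq_append_cons_cons_of_not_sortedLE {w : List (Fin n)} (h : ¬ w.SortedLE) :
    ∃ w₁ i j w₂, i < j ∧ w = w₁ ++ j :: i :: w₂ := by
  rw [sortedLE_iff_isChain, isChain_iff_forall_rel_of_append_cons_cons] at h
  push Not at h
  obtain ⟨j, i, w₁, w₂, rfl, hji⟩ := h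
  exact ⟨w₁, i, j, w₂, hji, rfl⟩

lemma inversions_append_swap_lt (w₁ w₂ : List (Fin n)) {i j : Fin n} (hij : i < j) :
    inversions (w₁ ++ i :: j :: w₂) < inversions (w₁ ++ j :: i :: w₂) := by
  induction w₁ with
  | nil =>
    simp +arith [inversions, hij, not_lt.2 hij.le]
  | cons a w₁ ih =>
    simp only [cons_append, inversions, countP_append, countP_cons]
    omega

section

variable {S : Type} [AddCommMonoid S] (s : Fin n → S)

lemma piMap_add (ξ ν : Fin n → ℕ) : piMap s (ξ + ν) = piMap s ξ + piMap s ν := by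
  simp [piMap, add_smul, Finset.sum_add_distrib]

lemma piMap_wordCount (w : List (Fin n)) : piMap s (wordCount w) = (w.map s).sum := by
  classical
  rw [Finset.sum_list_map_count, piMap]
  refine (Finset.sum_subset (Finset.subset_univ _) fun i _ hi => ?_).symm
  rw [wordCount, count_eq_zero.2 (by simpa using hi), zero_smul]

end

lemma prod_map_sortedWord {A : Type} [Ring A] (b : Fin n → A) (ξ : Fin n → ℕ) :
    ((sortedWord ξ).map b).prod = bpow b ξ := by
  simp [sortedWord, bpow, flatMap_def, prod_flatten, Function.comp_def, prod_replicate]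

lemma prod_map_eq_bpow_of_sortedLE {A : Type} [Ring A] (b : Fin n → A) {w : List (Fin n)}
    (h : w.SortedLE) : (w.map b).prod = bpow b (wordCount w) := by
  conv_lhs => rw [eq_sortedWord_of_sortedLE h]
  exact prod_map_sortedWord b _

lemma prod_map_append_cons_cons {k A : Type} [CommSemiring k] [Ring A] [Algebra k A]
    (b : Fin n → A) {i j : Fin n} {c : k} {f : (Fin n → ℕ) →₀ k}
    (h : b j * b i = c • (b i * b j) + f.sum fun ξ a => a • bpow b ξ) (w₁ w₂ : List (Fin n)) :
    ((w₁ ++ j :: i :: w₂).map b).prod =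
      c • ((w₁ ++ i :: j :: w₂).map b).prod +
        f.sum fun ξ a => a • ((w₁ ++ sortedWord ξ ++ w₂).map b).prod := by
  simp only [map_append, map_cons, prod_append, prod_cons, prod_map_sortedWord]
  rw [← mul_assoc (b j), h]
  simp only [Finsupp.sum, add_mul, mul_add, Finset.sum_mul, Finset.mul_sum, smul_mul_assoc,
    mul_smul_comm, mul_assoc]

section Filtration

variable {k A S : Type} [Field k] [Ring A] [Algebra k A] [AddCommMonoid S]
  (s : Fin n → S) (φ : S →+ ℕ) (b : Fin n → A)

lemma bpow_mem_typeFilt {ξ : Fin n → ℕ} {l : ℕ} (h : φ (piMap s ξ) ≤ l) :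
    bpow b ξ ∈ typeFilt k s φ b l :=
  Submodule.subset_span ⟨ξ, h, rfl⟩

lemma typeFilt_mono : Monotone (typeFilt k s φ b) :=
  fun _ _ hl => Submodule.span_mono fun _ ⟨ξ, hξ, hx⟩ => ⟨ξ, hξ.trans hl, hx⟩

lemma mem_typeFilt_of_sub_smul_bpow_mem {x : A} {γ : k} {ξ : Fin n → ℕ}
    (h : x - γ • bpow b ξ ∈ typeFilt k s φ b (φ (piMap s ξ) - 1)) :
    x ∈ typeFilt k s φ b (φ (piMap s ξ)) := by
  simpa using add_mem (typeFilt_mono s φ b (Nat.sub_le _ 1) h)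
    (Submodule.smul_mem _ γ (bpow_mem_typeFilt s φ b le_rfl))

lemma typeFilt_mul_le
    (h : ∀ ξ ν, bpow b ξ * bpow b ν ∈ typeFilt k s φ b (φ (piMap s (ξ + ν)))) (l l' : ℕ) :
    typeFilt k s φ b l * typeFilt k s φ b l' ≤ typeFilt k s φ b (l + l') := by
  rw [typeFilt, typeFilt, Submodule.span_mul_span, Submodule.span_le]
  rintro _ ⟨_, ⟨ξ, hξ, rfl⟩, _, ⟨ν, hν, rfl⟩, rfl⟩
  refine typeFilt_mono s φ b ?_ (h ξ ν)
  rw [piMap_add, map_add]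
  omega

theorem exists_prod_map_sub_smul_bpow_mem (c : Fin n → Fin n → k) (hc : ∀ i j, c i j ≠ 0)
    (cc : Fin n → Fin n → ((Fin n → ℕ) →₀ k))
    (hccsupp : ∀ i j ξ, cc i j ξ ≠ 0 → φ (piMap s ξ) < φ (s i + s j))
    (hcomm : ∀ i j : Fin n, i < j →
      b j * b i = c i j • (b i * b j) + (cc i j).sum fun ξ a => a • bpow b ξ)
    (w : List (Fin n)) :
    ∃ γ : k, γ ≠ 0 ∧ (w.map b).prod - γ • bpow b (wordCount w) ∈
      typeFilt k s φ b (φ (piMap s (wordCount w)) - 1) := by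
  by_cases hw : w.SortedLE
  · exact ⟨1, one_ne_zero, by simp [prod_map_eq_bpow_of_sortedLE b hw]⟩
  obtain ⟨w₁, i, j, w₂, hij, rfl⟩ := exists_eq_append_cons_cons_of_not_sortedLE hw
  have hcount : wordCount (w₁ ++ i :: j :: w₂) = wordCount (w₁ ++ j :: i :: w₂) :=
    wordCount_eq_of_perm (.append_left _ (.swap _ _ _))
  obtain ⟨γ, hγ, hswap⟩ :=
    exists_prod_map_sub_smul_bpow_mem c hc cc hccsupp hcomm (w₁ ++ i :: j :: w₂)
  have hlower : ∀ ξ, cc i j ξ ≠ 0 → ((w₁ ++ sortedWord ξ ++ w₂).map b).prod ∈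
      typeFilt k s φ b (φ (piMap s (wordCount (w₁ ++ j :: i :: w₂))) - 1) := by
    intro ξ hξ
    have hlt : φ (piMap s (wordCount (w₁ ++ sortedWord ξ ++ w₂))) <
        φ (piMap s (wordCount (w₁ ++ j :: i :: w₂))) := by
      have := hccsupp i j ξ hξ
      simp only [wordCount_append, wordCount_sortedWord, piMap_add, map_add, piMap_wordCount,
        map_cons, sum_cons] at this ⊢
      omega
    obtain ⟨γ', -, h⟩ := exists_prod_map_sub_smul_bpow_mem c hc cc hccsupp hcomm
      (w₁ ++ sortedWord ξ ++ w₂)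
    exact typeFilt_mono s φ b (by omega) (mem_typeFilt_of_sub_smul_bpow_mem s φ b h)
  refine ⟨c i j * γ, mul_ne_zero (hc i j) hγ, ?_⟩
  rw [hcount] at hswap
  rw [prod_map_append_cons_cons b (hcomm i j hij), mul_smul, add_sub_right_comm, ← smul_sub]
  exact add_mem (Submodule.smul_mem _ _ hswap)
    (Submodule.finsuppSum_mem _ _ _ _ fun ξ hξ => Submodule.smul_mem _ _ (hlower ξ hξ))
termination_by (φ (piMap s (wordCount w)), inversions w)
decreasing_by
  all_goals subst_vars
  · rw [hcount]
    exact Prod.Lex.right _ (inversions_append_swap_lt w₁ w₂ hij)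
  · exact Prod.Lex.left _ _ hlt

end Filtration

end SPhiType

theorem s_phi_type_filtration_general
    (k : Type) [Field k] (A : Type) [Ring A] [Algebra k A]
    (S : Type) [AddCancelCommMonoid S]
    (n : ℕ) (s : Fin n → S)
    (φ : S →+ ℕ)
    (b : Fin n → A)
    (c : Fin n → Fin n → k) (hc : ∀ i j : Fin n, c i j ≠ 0)
    (cc : Fin n → Fin n → ((Fin n → ℕ) →₀ k))
    (hccsupp : ∀ (i j : Fin n) (ξ : Fin n → ℕ), cc i j ξ ≠ 0 →
      φ (piMap s ξ) < φ (s i + s j))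
    (hcomm : ∀ i j : Fin n, i < j →
      b j * b i = c i j • (b i * b j) + (cc i j).sum fun ξ a => a • bpow b ξ) :
    (∀ ξ ν : Fin n → ℕ, ∃ γ : k, γ ≠ 0 ∧
      bpow b ξ * bpow b ν - γ • bpow b (ξ + ν) ∈
        typeFilt k s φ b (φ (piMap s (ξ + ν)) - 1)) ∧
    (∀ l l' : ℕ, ∀ x ∈ typeFilt k s φ b l, ∀ y ∈ typeFilt k s φ b l',
      x * y ∈ typeFilt k s φ b (l + l')) := by
  have hmonomial : ∀ ξ ν : Fin n → ℕ, ∃ γ : k, γ ≠ 0 ∧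
      bpow b ξ * bpow b ν - γ • bpow b (ξ + ν) ∈
        typeFilt k s φ b (φ (piMap s (ξ + ν)) - 1) := by
    intro ξ ν
    have hcount :
        SPhiType.wordCount (SPhiType.sortedWord ξ ++ SPhiType.sortedWord ν) = ξ + ν := by
      rw [SPhiType.wordCount_append, SPhiType.wordCount_sortedWord, SPhiType.wordCount_sortedWord]
    simpa [hcount, SPhiType.prod_map_sortedWord] using
      SPhiType.exists_prod_map_sub_smul_bpow_mem s φ b c hc cc hccsupp hcomm
        (SPhiType.sortedWord ξ ++ SPhiType.sortedWord ν)
  refine ⟨hmonomial, fun l l' x hx y hy =>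
    SPhiType.typeFilt_mul_le s φ b (fun ξ ν => ?_) l l' (Submodule.mul_mem_mul hx hy)⟩
  obtain ⟨γ, -, h⟩ := hmonomial ξ ν
  exact SPhiType.mem_typeFilt_of_sub_smul_bpow_mem s φ b h

/-- Let `A` be an algebra of `(S,φ)`-type with respect to a
presentation `(π, P)` of the positive affine semigroup `S` (Hilbert basis
`s 1, ..., s n`, `P` a finite family generating the congruence `ker π`), with
generators `b 1, ..., b n`. Then for all `ξ, ν ∈ ℕ^n` there is a nonzero scalar
`γ` with `𝐛^ξ 𝐛^ν ≡ γ 𝐛^{ξ+ν}` modulo `F_{φ̃(ξ+ν)-1} A`; in particular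
`{F_l A}` is a multiplicative filtration of `A`. -/
theorem s_phi_type_filtration
    (k : Type) [Field k] (A : Type) [Ring A] [Algebra k A]
    (S : Type) [AddCancelCommMonoid S]
    (n m : ℕ) (s : Fin n → S)
    (hsurj : Function.Surjective (piMap s))
    (hs : Set.range s = {t : S | t ≠ 0 ∧ ∀ x y : S, t = x + y → x = 0 ∨ y = 0})
    (φ : S →+ ℕ) (hφ : ∀ t : S, φ t = 0 → t = 0)
    (P : Fin m → (Fin n → ℕ) × (Fin n → ℕ))
    (hP : ∀ ξ ν : Fin n → ℕ,
      addConGen (fun a b => ∃ i : Fin m, a = (P i).1 ∧ b = (P i).2) ξ ν ↔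
        piMap s ξ = piMap s ν)
    (b : Fin n → A) (hgen : Algebra.adjoin k (Set.range b) = ⊤)
    (c : Fin n → Fin n → k) (hc : ∀ i j : Fin n, c i j ≠ 0)
    (cc : Fin n → Fin n → ((Fin n → ℕ) →₀ k))
    (hccsupp : ∀ (i j : Fin n) (ξ : Fin n → ℕ), cc i j ξ ≠ 0 →
      φ (piMap s ξ) < φ (s i + s j))
    (hcomm : ∀ i j : Fin n, i < j →
      b j * b i = c i j • (b i * b j) + (cc i j).sum fun ξ a => a • bpow b ξ)
    (d : Fin m → k) (hd : ∀ i, d i ≠ 0)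
    (dd : Fin m → ((Fin n → ℕ) →₀ k))
    (hddsupp : ∀ (i : Fin m) (ξ : Fin n → ℕ), dd i ξ ≠ 0 →
      φ (piMap s ξ) < φ (piMap s (P i).1))
    (hstr : ∀ i : Fin m,
      bpow b (P i).2 = d i • bpow b (P i).1 + (dd i).sum fun ξ a => a • bpow b ξ) :
    (∀ ξ ν : Fin n → ℕ, ∃ γ : k, γ ≠ 0 ∧
      bpow b ξ * bpow b ν - γ • bpow b (ξ + ν) ∈
        typeFilt k s φ b (φ (piMap s (ξ + ν)) - 1)) ∧
    (∀ l l' : ℕ, ∀ x ∈ typeFilt k s φ b l, ∀ y ∈ typeFilt k s φ b l',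
      x * y ∈ typeFilt k s φ b (l + l')) :=
  s_phi_type_filtration_general k A S n s φ b c hc cc hccsupp hcomm
end

section
/- Let A be an algebra of (S,φ)-type with respect to a presentation (π, P). Then for every pair (ξ, ν) in the congruence L(π) = {(ξ,ν) : π(ξ) = π(ν)} there exists d_{ξ,ν} ∈ k^× such that 𝐛^ξ ≡ d_{ξ,ν} 𝐛^ν modulo F_{φ̃(ξ)-1} A. -/
def ProportionalMod {k V : Type*} [DivisionRing k] [AddCommGroup V] [Module k V]
    (M : Submodule k V) (x y : V) : Prop :=
  ∃ γ : k, γ ≠ 0 ∧ x - γ • y ∈ M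

namespace ProportionalMod

section Module

variable {k V W : Type*} [DivisionRing k] [AddCommGroup V] [Module k V] [AddCommGroup W]
  [Module k W] {M N : Submodule k V} {x y z : V}

@[refl]
theorem refl (M : Submodule k V) (x : V) : ProportionalMod M x x :=
  ⟨1, one_ne_zero, by simp⟩

theorem symm (h : ProportionalMod M x y) : ProportionalMod M y x := by
  obtain ⟨γ, hγ, hxy⟩ := h
  refine ⟨γ⁻¹, inv_ne_zero hγ, ?_⟩
  convert M.smul_mem (-γ⁻¹) hxy using 1
  rw [smul_sub, smul_smul, neg_mul, inv_mul_cancel₀ hγ, neg_smul, neg_smul, one_smul]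
  abel

theorem trans (h : ProportionalMod M x y) (h' : ProportionalMod M y z) :
    ProportionalMod M x z := by
  obtain ⟨γ, hγ, hxy⟩ := h
  obtain ⟨γ', hγ', hyz⟩ := h'
  refine ⟨γ * γ', mul_ne_zero hγ hγ', ?_⟩
  convert M.add_mem hxy (M.smul_mem γ hyz) using 1
  rw [smul_sub, smul_smul]
  abel

theorem mono (h : ProportionalMod M x y) (hMN : M ≤ N) : ProportionalMod N x y :=
  let ⟨γ, hγ, hxy⟩ := h
  ⟨γ, hγ, hMN hxy⟩

theorem mem_of_mem (h : ProportionalMod M x y) (hy : y ∈ M) : x ∈ M := by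
  obtain ⟨γ, -, hxy⟩ := h
  simpa using M.add_mem hxy (M.smul_mem γ hy)

theorem map (h : ProportionalMod M x y) (f : V →ₗ[k] W) :
    ProportionalMod (M.map f) (f x) (f y) :=
  let ⟨γ, hγ, hxy⟩ := h
  ⟨γ, hγ, by simpa using M.mem_map_of_mem (f := f) hxy⟩

end Module

theorem mul {k A : Type*} [Field k] [Ring A] [Algebra k A] {M N X Y L : Submodule k A}
    {x x' y y' : A} (hx : ProportionalMod M x x') (hy : ProportionalMod N y y')
    (hx' : x' ∈ X) (hy' : y ∈ Y) (hMY : M * Y ≤ L) (hXN : X * N ≤ L) :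
    ProportionalMod L (x * y) (x' * y') := by
  obtain ⟨γ, hγ, hxx⟩ := hx
  obtain ⟨γ', hγ', hyy⟩ := hy
  refine ⟨γ * γ', mul_ne_zero hγ hγ', ?_⟩
  have hsplit : x * y - (γ * γ') • (x' * y') = (x - γ • x') * y + γ • (x' * (y - γ' • y')) := by
    rw [sub_mul, mul_sub, mul_smul_comm, smul_sub, smul_smul, smul_mul_assoc]
    abel
  rw [hsplit]
  exact L.add_mem (hMY (Submodule.mul_mem_mul hxx hy'))
    (L.smul_mem γ (hXN (Submodule.mul_mem_mul hx' hyy)))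

end ProportionalMod

section Inversions

variable {α : Type*} [LinearOrder α]

def inversionCount : List α → ℕ
  | [] => 0
  | a :: l => l.countP (· < a) + inversionCount l

theorem inversionCount_swap_lt {i j : α} (hji : j < i) (u v : List α) :
    inversionCount (u ++ j :: i :: v) < inversionCount (u ++ i :: j :: v) := by
  induction u with
  | nil =>
    simp [inversionCount, hji, hji.not_gt]
    omega
  | cons a u ih =>
    simp only [List.cons_append, inversionCount]
    rw [((List.Perm.swap i j v).append_left u).countP_eq]
    omega

theorem exists_eq_append_cons_cons_of_not_pairwise {w : List α}
    (hw : ¬ w.Pairwise (· ≤ ·)) : ∃ u i j v, w = u ++ i :: j :: v ∧ j < i := by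
  rw [← List.isChain_iff_pairwise, List.isChain_iff_forall_rel_of_append_cons_cons] at hw
  push Not at hw
  obtain ⟨i, j, u, v, rfl, hij⟩ := hw
  exact ⟨u, i, j, v, rfl, hij⟩

end Inversions

section Words

variable {A : Type} [Ring A] {S : Type} [AddCommMonoid S] {n : ℕ}

def wordProd (b : Fin n → A) (w : List (Fin n)) : A :=
  (w.map b).prod

def wordCount (w : List (Fin n)) : Fin n → ℕ :=
  fun i => w.count i

def sortedWord (ξ : Fin n → ℕ) : List (Fin n) :=
  (List.finRange n).flatMap fun i => List.replicate (ξ i) i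

@[simp]
theorem wordProd_append (b : Fin n → A) (u v : List (Fin n)) :
    wordProd b (u ++ v) = wordProd b u * wordProd b v := by
  simp [wordProd]

@[simp]
theorem wordProd_cons (b : Fin n → A) (i : Fin n) (w : List (Fin n)) :
    wordProd b (i :: w) = b i * wordProd b w := by
  simp [wordProd]

@[simp]
theorem wordProd_sortedWord (b : Fin n → A) (ξ : Fin n → ℕ) :
    wordProd b (sortedWord ξ) = bpow b ξ := by
  simp [wordProd, sortedWord, bpow, List.flatMap, List.map_flatten, List.prod_flatten,
    Function.comp_def, List.map_replicate]

theorem wordCount_append (u v : List (Fin n)) :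
    wordCount (u ++ v) = wordCount u + wordCount v := by
  funext i
  simp [wordCount]

@[simp]
theorem wordCount_sortedWord (ξ : Fin n → ℕ) : wordCount (sortedWord ξ) = ξ := by
  funext j
  simp [wordCount, sortedWord, List.count_flatMap, List.count_replicate, Function.comp_def,
    ← Fin.sum_univ_def]

theorem pairwise_sortedWord (ξ : Fin n → ℕ) : (sortedWord ξ).Pairwise (· ≤ ·) := by
  refine List.pairwise_flatten.2 ⟨?_, ?_⟩
  · simp only [List.mem_map]
    rintro _ ⟨i, -, rfl⟩
    exact List.pairwise_replicate.2 (Or.inr le_rfl)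
  · refine List.pairwise_map.2 ((List.pairwise_lt_finRange n).imp_of_mem ?_)
    intro i j _ _ hij a ha b hb
    rw [List.eq_of_mem_replicate ha, List.eq_of_mem_replicate hb]
    exact hij.le

theorem wordProd_eq_bpow_of_pairwise (b : Fin n → A) {w : List (Fin n)}
    (hw : w.Pairwise (· ≤ ·)) : wordProd b w = bpow b (wordCount w) := by
  have hperm : w.Perm (sortedWord (wordCount w)) :=
    List.perm_iff_count.2 fun i => congrFun (wordCount_sortedWord (wordCount w)).symm i
  rw [← wordProd_sortedWord]
  exact congrArg (wordProd b) (hperm.eq_of_pairwise' hw (pairwise_sortedWord _))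

theorem piMap_add (s : Fin n → S) (ξ ν : Fin n → ℕ) :
    piMap s (ξ + ν) = piMap s ξ + piMap s ν := by
  simp [piMap, add_smul, Finset.sum_add_distrib]

theorem piMap_wordCount (s : Fin n → S) (w : List (Fin n)) :
    piMap s (wordCount w) = (w.map s).sum := by
  induction w with
  | nil => simp [piMap, wordCount]
  | cons a w ih =>
    simp only [piMap, wordCount, List.count_cons, beq_iff_eq, add_smul, Finset.sum_add_distrib,
      ite_smul, one_smul, zero_smul, Finset.sum_ite_eq, Finset.mem_univ, if_true,
      List.map_cons, List.sum_cons] at ih ⊢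
    rw [ih, add_comm]

theorem sum_map_sortedWord (s : Fin n → S) (ξ : Fin n → ℕ) :
    ((sortedWord ξ).map s).sum = piMap s ξ := by
  rw [← piMap_wordCount, wordCount_sortedWord]

end Words

/-- `F_{<l} A`; unlike `typeFilt k s φ b (l - 1)` it is `0` for `l = 0`. -/
noncomputable def typeFiltLT (k : Type) [Field k] {A : Type} [Ring A] [Algebra k A]
    {S : Type} [AddCommMonoid S] {n : ℕ} (s : Fin n → S) (φ : S →+ ℕ)
    (b : Fin n → A) (l : ℕ) : Submodule k A :=
  Submodule.span k {x | ∃ ξ : Fin n → ℕ, φ (piMap s ξ) < l ∧ x = bpow b ξ}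

def CommuteModLower (k : Type) [Field k] {A : Type} [Ring A] [Algebra k A]
    {S : Type} [AddCommMonoid S] {n : ℕ} (s : Fin n → S) (φ : S →+ ℕ) (b : Fin n → A) : Prop :=
  ∀ i j : Fin n, i < j →
    ProportionalMod (typeFiltLT k s φ b (φ (s i + s j))) (b j * b i) (b i * b j)

section Filtration

variable {k : Type} [Field k] {A : Type} [Ring A] [Algebra k A] {S : Type} [AddCommMonoid S]
  {n : ℕ} {s : Fin n → S} {φ : S →+ ℕ} {b : Fin n → A}

theorem typeFiltLT_mono {l l' : ℕ} (h : l ≤ l') :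
    typeFiltLT k s φ b l ≤ typeFiltLT k s φ b l' :=
  Submodule.span_mono fun _ ⟨ξ, hξ, hx⟩ => ⟨ξ, hξ.trans_le h, hx⟩

theorem typeFiltLT_le_typeFilt_pred (l : ℕ) : typeFiltLT k s φ b l ≤ typeFilt k s φ b (l - 1) :=
  Submodule.span_mono fun _ ⟨ξ, hξ, hx⟩ => ⟨ξ, Nat.le_sub_one_of_lt hξ, hx⟩

theorem bpow_mem_typeFiltLT {ξ : Fin n → ℕ} {l : ℕ} (h : φ (piMap s ξ) < l) :
    bpow b ξ ∈ typeFiltLT k s φ b l :=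
  Submodule.subset_span ⟨ξ, h, rfl⟩

theorem bpow_mem_typeFilt {ξ : Fin n → ℕ} {l : ℕ} (h : φ (piMap s ξ) ≤ l) :
    bpow b ξ ∈ typeFilt k s φ b l :=
  Submodule.subset_span ⟨ξ, h, rfl⟩

theorem proportionalMod_of_eq_smul_add_sum {x y : A} {γ : k} (hγ : γ ≠ 0)
    {f : (Fin n → ℕ) →₀ k} {l : ℕ} (hf : ∀ ξ, f ξ ≠ 0 → φ (piMap s ξ) < l)
    (h : x = γ • y + f.sum fun ξ a => a • bpow b ξ) :
    ProportionalMod (typeFiltLT k s φ b l) x y := by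
  refine ⟨γ, hγ, ?_⟩
  rw [h, add_sub_cancel_left]
  exact Submodule.sum_mem _ fun ξ hξ =>
    Submodule.smul_mem _ _ (bpow_mem_typeFiltLT (hf ξ (Finsupp.mem_support_iff.1 hξ)))

theorem wordProd_swap_proportionalMod (hcomm : CommuteModLower k s φ b) {D : ℕ}
    {u v : List (Fin n)} {i j : Fin n} (hji : j < i)
    (hD : φ (piMap s (wordCount (u ++ i :: j :: v))) = D)
    (hlower : ∀ z, φ (piMap s (wordCount z)) < D → wordProd b z ∈ typeFiltLT k s φ b D) :
    ProportionalMod (typeFiltLT k s φ b D) (wordProd b (u ++ i :: j :: v))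
      (wordProd b (u ++ j :: i :: v)) := by
  set f := LinearMap.mulLeftRight k (wordProd b u, wordProd b v)
  have hf : ∀ w, f w = wordProd b u * w * wordProd b v := fun _ => rfl
  have hmap : (typeFiltLT k s φ b (φ (s j + s i))).map f ≤ typeFiltLT k s φ b D := by
    refine (Submodule.map_span_le _ _ _).2 ?_
    rintro _ ⟨ξ, hξ, rfl⟩
    rw [hf, ← wordProd_sortedWord, ← wordProd_append, ← wordProd_append]
    apply hlower
    simp only [piMap_wordCount, List.map_append, List.map_cons, List.sum_append, List.sum_cons,
      sum_map_sortedWord, map_add] at hD hξ ⊢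
    omega
  have := ((hcomm j i hji).map f).mono hmap
  simpa [hf, mul_assoc] using this

theorem wordProd_proportionalMod_bpow (hcomm : CommuteModLower k s φ b) (w : List (Fin n)) :
    ProportionalMod (typeFiltLT k s φ b (φ (piMap s (wordCount w)))) (wordProd b w)
      (bpow b (wordCount w)) := by
  induction hD : φ (piMap s (wordCount w)) using Nat.strong_induction_on generalizing w with
  | _ D ihD =>
  induction hN : inversionCount w using Nat.strong_induction_on generalizing w with
  | _ N ihN =>
  by_cases hw : w.Pairwise (· ≤ ·)
  · exact wordProd_eq_bpow_of_pairwise b hw ▸ .refl _ _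
  obtain ⟨u, i, j, v, rfl, hji⟩ := exists_eq_append_cons_cons_of_not_pairwise hw
  have hcount : wordCount (u ++ j :: i :: v) = wordCount (u ++ i :: j :: v) :=
    funext ((List.Perm.swap i j v).append_left u).count_eq
  have hlower : ∀ z, φ (piMap s (wordCount z)) < D → wordProd b z ∈ typeFiltLT k s φ b D :=
    fun z hz => ((ihD _ hz z rfl).mono (typeFiltLT_mono hz.le)).mem_of_mem
      (bpow_mem_typeFiltLT hz)
  have hswapped := ihN _ (hN ▸ inversionCount_swap_lt hji u v) (u ++ j :: i :: v)
    (by rw [hcount, hD]) rfl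
  rw [hcount] at hswapped
  exact (wordProd_swap_proportionalMod hcomm hji hD hlower).trans hswapped

theorem bpow_mul_bpow_proportionalMod (hcomm : CommuteModLower k s φ b) (ξ ν : Fin n → ℕ) :
    ProportionalMod (typeFiltLT k s φ b (φ (piMap s ξ) + φ (piMap s ν)))
      (bpow b ξ * bpow b ν) (bpow b (ξ + ν)) := by
  simpa [wordCount_append, piMap_add] using
    wordProd_proportionalMod_bpow hcomm (sortedWord ξ ++ sortedWord ν)

theorem bpow_mul_bpow_mem_typeFiltLT (hcomm : CommuteModLower k s φ b) {ξ ν : Fin n → ℕ}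
    {l : ℕ} (h : φ (piMap s ξ) + φ (piMap s ν) < l) :
    bpow b ξ * bpow b ν ∈ typeFiltLT k s φ b l :=
  ((bpow_mul_bpow_proportionalMod hcomm ξ ν).mono (typeFiltLT_mono h.le)).mem_of_mem
    (bpow_mem_typeFiltLT (by rwa [piMap_add, map_add]))

theorem typeFiltLT_mul_typeFilt_le (hcomm : CommuteModLower k s φ b) (p q : ℕ) :
    typeFiltLT k s φ b p * typeFilt k s φ b q ≤ typeFiltLT k s φ b (p + q) := by
  rw [typeFiltLT, typeFilt, Submodule.span_mul_span, Submodule.span_le]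
  rintro _ ⟨_, ⟨ξ, hξ, rfl⟩, _, ⟨ν, hν, rfl⟩, rfl⟩
  exact bpow_mul_bpow_mem_typeFiltLT hcomm (by omega)

theorem typeFilt_mul_typeFiltLT_le (hcomm : CommuteModLower k s φ b) (p q : ℕ) :
    typeFilt k s φ b p * typeFiltLT k s φ b q ≤ typeFiltLT k s φ b (p + q) := by
  rw [typeFiltLT, typeFilt, Submodule.span_mul_span, Submodule.span_le]
  rintro _ ⟨_, ⟨ξ, hξ, rfl⟩, _, ⟨ν, hν, rfl⟩, rfl⟩
  exact bpow_mul_bpow_mem_typeFiltLT hcomm (by omega)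

def straighteningCon (hcomm : CommuteModLower k s φ b) : AddCon (Fin n → ℕ) where
  r ξ ν := piMap s ξ = piMap s ν ∧
    ProportionalMod (typeFiltLT k s φ b (φ (piMap s ξ))) (bpow b ξ) (bpow b ν)
  iseqv :=
    { refl := fun _ => ⟨rfl, .refl _ _⟩
      symm := fun ⟨hπ, h⟩ => ⟨hπ.symm, hπ ▸ h.symm⟩
      trans := fun ⟨hπ, h⟩ ⟨hπ', h'⟩ => ⟨hπ.trans hπ', h.trans (hπ ▸ h')⟩ }
  add' := by
    rintro ξ ν ξ' ν' ⟨hπ, h⟩ ⟨hπ', h'⟩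
    refine ⟨by rw [piMap_add, piMap_add, hπ, hπ'], ?_⟩
    rw [piMap_add, map_add]
    have hprod : ProportionalMod (typeFiltLT k s φ b (φ (piMap s ξ) + φ (piMap s ξ')))
        (bpow b ξ * bpow b ξ') (bpow b ν * bpow b ν') :=
      h.mul h' (bpow_mem_typeFilt (congrArg φ hπ).ge) (bpow_mem_typeFilt le_rfl)
        (typeFiltLT_mul_typeFilt_le hcomm _ _) (typeFilt_mul_typeFiltLT_le hcomm _ _)
    refine (bpow_mul_bpow_proportionalMod hcomm ξ ξ').symm.trans (hprod.trans ?_)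
    rw [hπ, hπ']
    exact bpow_mul_bpow_proportionalMod hcomm ν ν'

end Filtration

theorem s_phi_type_straightening_general
    (k : Type) [Field k] (A : Type) [Ring A] [Algebra k A]
    (S : Type) [AddCancelCommMonoid S]
    (n m : ℕ) (s : Fin n → S)
    (φ : S →+ ℕ)
    (P : Fin m → (Fin n → ℕ) × (Fin n → ℕ))
    (hP : ∀ ξ ν : Fin n → ℕ,
      addConGen (fun a b => ∃ i : Fin m, a = (P i).1 ∧ b = (P i).2) ξ ν ↔
        piMap s ξ = piMap s ν)
    (b : Fin n → A)
    (c : Fin n → Fin n → k) (hc : ∀ i j : Fin n, c i j ≠ 0)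
    (cc : Fin n → Fin n → ((Fin n → ℕ) →₀ k))
    (hccsupp : ∀ (i j : Fin n) (ξ : Fin n → ℕ), cc i j ξ ≠ 0 →
      φ (piMap s ξ) < φ (s i + s j))
    (hcomm : ∀ i j : Fin n, i < j →
      b j * b i = c i j • (b i * b j) + (cc i j).sum fun ξ a => a • bpow b ξ)
    (d : Fin m → k) (hd : ∀ i, d i ≠ 0)
    (dd : Fin m → ((Fin n → ℕ) →₀ k))
    (hddsupp : ∀ (i : Fin m) (ξ : Fin n → ℕ), dd i ξ ≠ 0 →
      φ (piMap s ξ) < φ (piMap s (P i).1))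
    (hstr : ∀ i : Fin m,
      bpow b (P i).2 = d i • bpow b (P i).1 + (dd i).sum fun ξ a => a • bpow b ξ) :
    ∀ ξ ν : Fin n → ℕ, piMap s ξ = piMap s ν → ∃ γ : k, γ ≠ 0 ∧
      bpow b ξ - γ • bpow b ν ∈ typeFilt k s φ b (φ (piMap s ξ) - 1) := by
  have hcommLower : CommuteModLower k s φ b := fun i j hij =>
    proportionalMod_of_eq_smul_add_sum (hc i j) (hccsupp i j) (hcomm i j hij)
  have hgens : addConGen (fun a b => ∃ i : Fin m, a = (P i).1 ∧ b = (P i).2) ≤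
      straighteningCon hcommLower := by
    refine AddCon.addConGen_le.2 ?_
    rintro _ _ ⟨i, rfl, rfl⟩
    exact ⟨(hP _ _).1 (AddConGen.Rel.of _ _ ⟨i, rfl, rfl⟩),
      (proportionalMod_of_eq_smul_add_sum (hd i) (hddsupp i) (hstr i)).symm⟩
  intro ξ ν hξν
  obtain ⟨-, γ, hγ, hmem⟩ := hgens ((hP ξ ν).2 hξν)
  exact ⟨γ, hγ, typeFiltLT_le_typeFilt_pred _ hmem⟩

/-- Let `A` be an algebra of `(S,φ)`-type with respect to a
presentation `(π, P)`. Then for every pair `(ξ, ν)` in the congruence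
`L(π) = {(ξ,ν) : π ξ = π ν}` there exists `γ ∈ k^×` such that
`𝐛^ξ ≡ γ 𝐛^ν` modulo `F_{φ̃(ξ)-1} A`. -/
theorem s_phi_type_straightening
    (k : Type) [Field k] (A : Type) [Ring A] [Algebra k A]
    (S : Type) [AddCancelCommMonoid S]
    (n m : ℕ) (s : Fin n → S)
    (hsurj : Function.Surjective (piMap s))
    (hs : Set.range s = {t : S | t ≠ 0 ∧ ∀ x y : S, t = x + y → x = 0 ∨ y = 0})
    (φ : S →+ ℕ) (hφ : ∀ t : S, φ t = 0 → t = 0)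
    (P : Fin m → (Fin n → ℕ) × (Fin n → ℕ))
    (hP : ∀ ξ ν : Fin n → ℕ,
      addConGen (fun a b => ∃ i : Fin m, a = (P i).1 ∧ b = (P i).2) ξ ν ↔
        piMap s ξ = piMap s ν)
    (b : Fin n → A) (hgen : Algebra.adjoin k (Set.range b) = ⊤)
    (c : Fin n → Fin n → k) (hc : ∀ i j : Fin n, c i j ≠ 0)
    (cc : Fin n → Fin n → ((Fin n → ℕ) →₀ k))
    (hccsupp : ∀ (i j : Fin n) (ξ : Fin n → ℕ), cc i j ξ ≠ 0 →
      φ (piMap s ξ) < φ (s i + s j))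
    (hcomm : ∀ i j : Fin n, i < j →
      b j * b i = c i j • (b i * b j) + (cc i j).sum fun ξ a => a • bpow b ξ)
    (d : Fin m → k) (hd : ∀ i, d i ≠ 0)
    (dd : Fin m → ((Fin n → ℕ) →₀ k))
    (hddsupp : ∀ (i : Fin m) (ξ : Fin n → ℕ), dd i ξ ≠ 0 →
      φ (piMap s ξ) < φ (piMap s (P i).1))
    (hstr : ∀ i : Fin m,
      bpow b (P i).2 = d i • bpow b (P i).1 + (dd i).sum fun ξ a => a • bpow b ξ) :
    ∀ ξ ν : Fin n → ℕ, piMap s ξ = piMap s ν → ∃ γ : k, γ ≠ 0 ∧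
      bpow b ξ - γ • bpow b ν ∈ typeFilt k s φ b (φ (piMap s ξ) - 1) :=
  s_phi_type_straightening_general k A S n m s φ P hP b c hc cc hccsupp hcomm d hd dd hddsupp hstr
end
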